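/- For every integer k ≥ 2, the generating functions for Primc-coloured partitions satisfy G_{k_a}(q;a,c,d) − G_{(k−1)_d}(q;a,c,d) = E_{k_a}(q;a,c,d) = a q^k ( E_{(k−1)_b}(q;a,c,d) + G_{(k−2)_d}(q;a,c,d) ), with the convention G_{0_d} = 1. -/

import Mathlib

/-- The four colours of Primc's identity. -/
inductive PrimcColor : Type
  | a | b | c | d
  deriving DecidableEq

open PrimcColor

/-- The difference matrix B: B(x,y) is the minimal difference between a part of colour x
and the following part of colour y. -/
def matB : PrimcColor → PrimcColor → ℕ
  | a, a => 2 | a, b => 1 | a, c => 2 | a, d => 2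
  | b, a => 1 | b, b => 0 | b, c => 1 | b, d => 1
  | c, a => 0 | c, b => 1 | c, c => 0 | c, d => 2
  | d, a => 0 | d, b => 1 | d, c => 0 | d, d => 2

/-- A Primc-coloured partition: a finite sequence of coloured positive integers
satisfying the difference conditions of the matrix B. -/
def IsPrimcPartition (l : List (ℕ × PrimcColor)) : Prop :=
  (∀ p ∈ l, 0 < p.1) ∧ l.Chain' (fun p q => q.1 + matB p.2 q.2 ≤ p.1)

/-- The rank of the coloured integer k_x in the total order
1_a < 1_b < 1_c < 1_d < 2_a < 2_b < 2_c < 2_d < ⋯. -/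
def primcRank (k : ℕ) (x : PrimcColor) : ℕ :=
  4 * k + (match x with | a => 0 | b => 1 | c => 2 | d => 3)

/-- The coefficient ring ℤ[a,c,d]: a is the variable of index 0, c of index 1,
d of index 2. -/
abbrev PrimcRing : Type := MvPolynomial (Fin 3) ℤ

/-- The generating function G_{k_x}(q;a,c,d) for Primc-coloured partitions with largest
part at most k_x, as a formal power series in q over ℤ[a,c,d]: the coefficient of q^n is
Σ A'(n;i,j,t) a^i c^j d^t where A'(n;i,j,t) is the number of Primc-coloured partitions
of n with i parts coloured a, j parts coloured c, t parts coloured d, all parts being at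
most k_x (note G_{0_d} = 1 since no coloured positive integer is ≤ 0_d). -/
noncomputable def primcG (k : ℕ) (x : PrimcColor) : PowerSeries PrimcRing :=
  PowerSeries.mk fun n =>
    ∑ i ∈ Finset.range (n + 1), ∑ j ∈ Finset.range (n + 1), ∑ t ∈ Finset.range (n + 1),
      (Nat.card {lam : List (ℕ × PrimcColor) // IsPrimcPartition lam ∧
          (∀ p ∈ lam, primcRank p.1 p.2 ≤ primcRank k x) ∧
          (lam.map Prod.fst).sum = n ∧
          lam.countP (fun p => decide (p.2 = a)) = i ∧
          lam.countP (fun p => decide (p.2 = c)) = j ∧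
          lam.countP (fun p => decide (p.2 = d)) = t} : PrimcRing) *
        (MvPolynomial.X 0 ^ i * MvPolynomial.X 1 ^ j * MvPolynomial.X 2 ^ t)

/-- The generating function E_{k_x}(q;a,c,d) for Primc-coloured partitions whose largest
part is exactly k_x (the largest part being the first one, as the difference conditions
force the parts to be non-increasing in the order on coloured integers). -/
noncomputable def primcE (k : ℕ) (x : PrimcColor) : PowerSeries PrimcRing :=
  PowerSeries.mk fun n =>
    ∑ i ∈ Finset.range (n + 1), ∑ j ∈ Finset.range (n + 1), ∑ t ∈ Finset.range (n + 1),
      (Nat.card {lam : List (ℕ × PrimcColor) // IsPrimcPartition lam ∧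
          lam.head? = some (k, x) ∧
          (lam.map Prod.fst).sum = n ∧
          lam.countP (fun p => decide (p.2 = a)) = i ∧
          lam.countP (fun p => decide (p.2 = c)) = j ∧
          lam.countP (fun p => decide (p.2 = d)) = t} : PrimcRing) *
        (MvPolynomial.X 0 ^ i * MvPolynomial.X 1 ^ j * MvPolynomial.X 2 ^ t)

/-! Encode each generating function as `genFun S`, the weighted count of a set `S` of
partitions. `genFun` is additive on disjoint unions of sets of lists with positive parts, and
prepending a fixed part `k_x` multiplies it by `x q^k`. Since the difference conditions make the
parts non-increasing in the order on coloured integers, a partition with parts at most `k_a`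
either has largest part `k_a` or has all parts at most `(k-1)_d`, its predecessor. Removing a
largest part `k_a` leaves a partition whose next part `q` satisfies `q + B(a, q) ≤ k`, i.e. `q` is
`(k-1)_b` or at most `(k-2)_d`. -/

instance : Fintype PrimcColor :=
  ⟨{a, b, c, d}, fun x => by cases x <;> decide⟩

namespace Primc

open Finset MvPolynomial

section Lists

variable {α : Type*}

lemma length_le_sum_fst {l : List (ℕ × α)} (hl : ∀ p ∈ l, 0 < p.1) :
    l.length ≤ (l.map Prod.fst).sum := by
  simpa using List.length_le_sum_of_one_le (l.map Prod.fst) fun _ hx => by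
    obtain ⟨p, hp, rfl⟩ := List.mem_map.1 hx
    exact hl p hp

lemma finite_sum_fst_eq [Finite α] (n : ℕ) :
    {l : List (ℕ × α) | (∀ p ∈ l, 0 < p.1) ∧ (l.map Prod.fst).sum = n}.Finite := by
  refine ((List.finite_length_le (Fin (n + 1) × α) n).image
    (List.map fun p => ((p.1 : ℕ), p.2))).subset ?_
  rintro l ⟨hpos, rfl⟩
  have hle : ∀ p ∈ l, p.1 < (l.map Prod.fst).sum + 1 := fun p hp =>
    Nat.lt_succ_of_le (List.le_sum_of_mem (List.mem_map_of_mem hp))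
  refine ⟨l.attach.map fun p => (⟨p.1.1, hle p.1 p.2⟩, p.1.2), ?_, ?_⟩
  · simpa using length_le_sum_fst hpos
  · simp [List.map_attach_eq_pmap, List.map_pmap, List.pmap_eq_map]

end Lists

noncomputable def colourWeight : PrimcColor → PrimcRing
  | a => X 0
  | b => 1
  | c => X 1
  | d => X 2

noncomputable def weight (l : List (ℕ × PrimcColor)) : PrimcRing :=
  X 0 ^ l.countP (fun p => decide (p.2 = a)) * X 1 ^ l.countP (fun p => decide (p.2 = c)) *
    X 2 ^ l.countP (fun p => decide (p.2 = d))

lemma weight_cons (p : ℕ × PrimcColor) (l : List (ℕ × PrimcColor)) :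
    weight (p :: l) = colourWeight p.2 * weight l := by
  obtain ⟨n, x⟩ := p
  cases x <;> simp only [weight, colourWeight, List.countP_cons] <;> simp <;> ring

def size (l : List (ℕ × PrimcColor)) : ℕ := (l.map Prod.fst).sum

/-- The coefficient of `q ^ n` is a `finsum`, which is `0` when infinitely many lists of `S`
have size `n`; hence the positivity hypotheses below. -/
noncomputable def genFun (S : Set (List (ℕ × PrimcColor))) : PowerSeries PrimcRing :=
  PowerSeries.mk fun n => ∑ᶠ l ∈ {l ∈ S | size l = n}, weight l

lemma finite_sep_size_eq {S : Set (List (ℕ × PrimcColor))} (hS : ∀ l ∈ S, ∀ p ∈ l, 0 < p.1)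
    (n : ℕ) : {l ∈ S | size l = n}.Finite :=
  (finite_sum_fst_eq n).subset fun l hl => ⟨hS l hl.1, hl.2⟩

lemma genFun_union {S T : Set (List (ℕ × PrimcColor))} (hS : ∀ l ∈ S, ∀ p ∈ l, 0 < p.1)
    (hT : ∀ l ∈ T, ∀ p ∈ l, 0 < p.1) (hST : Disjoint S T) :
    genFun (S ∪ T) = genFun S + genFun T := by
  refine PowerSeries.ext fun n => ?_
  simp only [genFun, PowerSeries.coeff_mk, map_add]
  rw [show {l ∈ S ∪ T | size l = n} = _ from Set.sep_union,
    finsum_mem_union (hST.mono (Set.sep_subset _ _) (Set.sep_subset _ _))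
      (finite_sep_size_eq hS n) (finite_sep_size_eq hT n)]

lemma genFun_image_cons (p : ℕ × PrimcColor) (S : Set (List (ℕ × PrimcColor))) :
    genFun (List.cons p '' S) =
      PowerSeries.C (colourWeight p.2) * PowerSeries.X ^ p.1 * genFun S := by
  refine PowerSeries.ext fun n => ?_
  have hsep :
      {l ∈ List.cons p '' S | size l = n} = List.cons p '' {l ∈ S | size l + p.1 = n} := by
    ext l
    constructor
    · rintro ⟨⟨t, ht, rfl⟩, hn⟩
      exact ⟨t, ⟨ht, by simp [size, add_comm] at hn ⊢; omega⟩, rfl⟩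
    · rintro ⟨t, ⟨ht, hn⟩, rfl⟩
      exact ⟨⟨t, ht, rfl⟩, by simp [size] at hn ⊢; omega⟩
  rw [mul_assoc, PowerSeries.coeff_C_mul, PowerSeries.coeff_X_pow_mul', genFun,
    PowerSeries.coeff_mk, hsep, finsum_mem_image List.cons_injective.injOn]
  simp only [weight_cons, ← mul_finsum_mem]
  split_ifs with hp
  · simp only [genFun, PowerSeries.coeff_mk, eq_tsub_iff_add_eq_of_le hp]
  · rw [finsum_mem_eq_zero_of_forall_eq_zero fun l hl => absurd hl.2 (by omega), mul_zero]

lemma countP_le_size {l : List (ℕ × PrimcColor)} (hl : ∀ p ∈ l, 0 < p.1)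
    (f : ℕ × PrimcColor → Bool) : l.countP f ≤ size l :=
  (List.countP_le_length).trans (length_le_sum_fst hl)

/-- The predicate is split as `P l ∧ Q l` so that this matches `primcG` and `primcE` literally
(`∧` associates to the right). -/
lemma mk_sum_card_eq_genFun (P Q : List (ℕ × PrimcColor) → Prop)
    (hP : ∀ l, P l → ∀ p ∈ l, 0 < p.1) :
    PowerSeries.mk (fun n =>
      ∑ i ∈ range (n + 1), ∑ j ∈ range (n + 1), ∑ t ∈ range (n + 1),
        (Nat.card {l // P l ∧ Q l ∧ (l.map Prod.fst).sum = n ∧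
            l.countP (fun p => decide (p.2 = a)) = i ∧
            l.countP (fun p => decide (p.2 = c)) = j ∧
            l.countP (fun p => decide (p.2 = d)) = t} : PrimcRing) *
          (X 0 ^ i * X 1 ^ j * X 2 ^ t)) = genFun {l | P l ∧ Q l} := by
  refine PowerSeries.ext fun n => ?_
  have hfin := finite_sep_size_eq (S := {l | P l ∧ Q l}) (fun l hl => hP l hl.1) n
  set F := hfin.toFinset
  let counts (l : List (ℕ × PrimcColor)) : ℕ × ℕ × ℕ :=
    (l.countP (fun p => decide (p.2 = a)), l.countP (fun p => decide (p.2 = c)),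
      l.countP (fun p => decide (p.2 = d)))
  have hcounts : ∀ l ∈ F, counts l ∈ range (n + 1) ×ˢ range (n + 1) ×ˢ range (n + 1) := by
    intro l hl
    obtain ⟨⟨hPl, -⟩, hsize⟩ := hfin.mem_toFinset.1 hl
    simp only [mem_product, mem_range, Nat.lt_succ_iff, ← hsize]
    exact ⟨countP_le_size (hP l hPl) _, countP_le_size (hP l hPl) _, countP_le_size (hP l hPl) _⟩
  rw [genFun, PowerSeries.coeff_mk, PowerSeries.coeff_mk,
    finsum_mem_eq_finite_toFinset_sum _ hfin, ← sum_fiberwise_of_maps_to hcounts, sum_product]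
  refine sum_congr rfl fun i _ => ?_
  rw [sum_product]
  refine sum_congr rfl fun j _ => sum_congr rfl fun t _ => ?_
  have hweight :
      ∀ l ∈ F.filter (counts · = (i, j, t)), weight l = X 0 ^ i * X 1 ^ j * X 2 ^ t := by
    intro l hl
    obtain ⟨hi, hj, ht⟩ : _ ∧ _ ∧ _ := by simpa [counts] using (mem_filter.1 hl).2
    rw [weight, hi, hj, ht]
  rw [sum_congr rfl hweight, sum_const, nsmul_eq_mul, ← Nat.card_eq_finsetCard]
  congr 2
  exact Nat.card_congr (Equiv.subtypeEquivRight fun l => by simp [F, counts, size, and_assoc])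

lemma primcRank_injective : Function.Injective (Function.uncurry primcRank) := by
  rintro ⟨k, x⟩ ⟨k', x'⟩ h
  cases x <;> cases x' <;> simp only [Function.uncurry_apply_pair, primcRank] at h <;>
    simp only [Prod.mk.injEq, and_true] <;> omega

lemma primcRank_le_of_add_matB_le {p q : ℕ × PrimcColor} (h : q.1 + matB p.2 q.2 ≤ p.1) :
    primcRank q.1 q.2 ≤ primcRank p.1 p.2 := by
  obtain ⟨_, x⟩ := p
  obtain ⟨_, y⟩ := q
  cases x <;> cases y <;> simp only [matB, primcRank] at h ⊢ <;> omega

lemma add_matB_a_le_iff (q : ℕ × PrimcColor) (m : ℕ) :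
    q.1 + matB a q.2 ≤ m + 2 ↔ q = (m + 1, b) ∨ primcRank q.1 q.2 ≤ primcRank m d := by
  obtain ⟨_, y⟩ := q
  cases y <;> simp only [matB, primcRank, Prod.mk.injEq, reduceCtorEq, and_false, and_true,
    false_or] <;> omega

lemma isPrimcPartition_cons {p : ℕ × PrimcColor} {l : List (ℕ × PrimcColor)} :
    IsPrimcPartition (p :: l) ↔
      0 < p.1 ∧ (∀ q ∈ l.head?, q.1 + matB p.2 q.2 ≤ p.1) ∧ IsPrimcPartition l := by
  simp only [IsPrimcPartition, List.mem_cons, forall_eq_or_imp, List.Chain', List.isChain_cons]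
  tauto

lemma primcRank_le_head {l : List (ℕ × PrimcColor)} (hl : IsPrimcPartition l)
    {h : ℕ × PrimcColor} (hh : l.head? = some h) {p : ℕ × PrimcColor} (hp : p ∈ l) :
    primcRank p.1 p.2 ≤ primcRank h.1 h.2 := by
  have : IsTrans (ℕ × PrimcColor) fun p q => primcRank q.1 q.2 ≤ primcRank p.1 p.2 :=
    ⟨fun _ _ _ h₁ h₂ => h₂.trans h₁⟩
  obtain ⟨t, rfl⟩ : ∃ t, l = h :: t := ⟨l.tail, List.eq_cons_of_mem_head? hh⟩
  have hsorted := List.isChain_iff_pairwise.1 (hl.2.imp fun _ _ => primcRank_le_of_add_matB_le)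
  rcases List.mem_cons.1 hp with rfl | hp
  · exact le_rfl
  · exact (List.pairwise_cons.1 hsorted).1 p hp

def partitionsLE (k : ℕ) (x : PrimcColor) : Set (List (ℕ × PrimcColor)) :=
  {l | IsPrimcPartition l ∧ ∀ p ∈ l, primcRank p.1 p.2 ≤ primcRank k x}

def partitionsHead (k : ℕ) (x : PrimcColor) : Set (List (ℕ × PrimcColor)) :=
  {l | IsPrimcPartition l ∧ l.head? = some (k, x)}

lemma primcG_eq_genFun (k : ℕ) (x : PrimcColor) : primcG k x = genFun (partitionsLE k x) :=
  mk_sum_card_eq_genFun _ _ fun _ h => h.1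

lemma primcE_eq_genFun (k : ℕ) (x : PrimcColor) : primcE k x = genFun (partitionsHead k x) :=
  mk_sum_card_eq_genFun _ _ fun _ h => h.1

lemma mem_partitionsLE_iff_head {k : ℕ} {x : PrimcColor} {l : List (ℕ × PrimcColor)} :
    l ∈ partitionsLE k x ↔
      IsPrimcPartition l ∧ ∀ h ∈ l.head?, primcRank h.1 h.2 ≤ primcRank k x := by
  refine and_congr_right fun hl => ⟨fun hle h hh => hle h (List.mem_of_mem_head? hh),
    fun hle p hp => ?_⟩
  obtain ⟨h, hh⟩ := Option.isSome_iff_exists.1 (List.isSome_head?.2 (List.ne_nil_of_mem hp))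
  exact (primcRank_le_head hl hh hp).trans (hle h hh)

lemma partitionsLE_eq_union_partitionsHead {k k' : ℕ} {x x' : PrimcColor}
    (h : primcRank k' x' + 1 = primcRank k x) :
    partitionsLE k x = partitionsLE k' x' ∪ partitionsHead k x := by
  ext l
  simp only [Set.mem_union, mem_partitionsLE_iff_head, partitionsHead, Set.mem_ofPred_eq]
  cases l with
  | nil => simp
  | cons q t =>
    simp only [List.head?_cons, Option.mem_def, Option.some.injEq, forall_eq', ← and_or_left]
    refine and_congr_right fun _ => ⟨fun hq => ?_, ?_⟩
    · rcases hq.lt_or_eq with hlt | heq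
      · exact Or.inl (by omega)
      · exact Or.inr (primcRank_injective heq)
    · rintro (hq | rfl)
      · omega
      · exact le_rfl

lemma disjoint_partitionsLE_partitionsHead {k k' : ℕ} {x x' : PrimcColor}
    (h : primcRank k' x' < primcRank k x) :
    Disjoint (partitionsLE k' x') (partitionsHead k x) :=
  Set.disjoint_left.2 fun _ hle hhead =>
    (hle.2 _ (List.mem_of_mem_head? hhead.2)).not_gt h

lemma partitionsHead_add_two_a (m : ℕ) :
    partitionsHead (m + 2) a =
      List.cons (m + 2, a) '' (partitionsHead (m + 1) b ∪ partitionsLE m d) := by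
  ext l
  simp only [Set.mem_image, Set.mem_union, mem_partitionsLE_iff_head, partitionsHead,
    Set.mem_ofPred_eq]
  constructor
  · rintro ⟨hl, hhead⟩
    obtain ⟨t, rfl⟩ : ∃ t, l = (m + 2, a) :: t := ⟨l.tail, List.eq_cons_of_mem_head? hhead⟩
    obtain ⟨-, hstep, ht⟩ := isPrimcPartition_cons.1 hl
    refine ⟨t, ?_, rfl⟩
    cases t with
    | nil => exact Or.inr ⟨ht, by simp⟩
    | cons q r =>
      rcases (add_matB_a_le_iff q m).1 (hstep q rfl) with rfl | hq
      · exact Or.inl ⟨ht, rfl⟩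
      · exact Or.inr ⟨ht, by simpa using hq⟩
  · rintro ⟨t, ht, rfl⟩
    refine ⟨isPrimcPartition_cons.2
      ⟨by omega, fun q hq => (add_matB_a_le_iff q m).2 ?_, ?_⟩, rfl⟩
    · rcases ht with ⟨-, hhead⟩ | ⟨-, hle⟩
      · exact Or.inl (Option.some_injective _ (hhead ▸ hq).symm)
      · exact Or.inr (hle q hq)
    · rcases ht with ⟨ht, -⟩ | ⟨ht, -⟩ <;> exact ht

end Primc

open Primc

open PowerSeries in
/-- For k ≥ 2: G_{k_a} − G_{(k−1)_d} = E_{k_a} = a q^k (E_{(k−1)_b} + G_{(k−2)_d}). -/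
theorem primcG_rec (k : ℕ) (hk : 2 ≤ k) :
    primcG k a - primcG (k - 1) d = primcE k a ∧
    primcE k a =
      C (MvPolynomial.X 0 : PrimcRing) * (X : PowerSeries PrimcRing) ^ k *
        (primcE (k - 1) b + primcG (k - 2) d) := by
  obtain ⟨m, rfl⟩ : ∃ m, k = m + 2 := ⟨k - 2, by omega⟩
  simp only [Nat.add_sub_cancel, Nat.add_succ_sub_one, primcG_eq_genFun, primcE_eq_genFun]
  constructor
  · rw [partitionsLE_eq_union_partitionsHead (k' := m + 1) (x' := d) rfl,
      genFun_union (fun l hl => hl.1.1) (fun l hl => hl.1.1)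
        (disjoint_partitionsLE_partitionsHead (by simp only [primcRank]; omega)),
      add_sub_cancel_left]
  · rw [partitionsHead_add_two_a, genFun_image_cons,
      genFun_union (fun l hl => hl.1.1) (fun l hl => hl.1.1)
        (disjoint_partitionsLE_partitionsHead (by simp only [primcRank]; omega)).symm]
    rfl
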